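/- For positive reals γ_bn and thresholds t_n = 2^{2R_n}-1, t_f = 2^{2R_f}-1 (R_n, R_f > 0), the constraint system 0 ≤ α_n ≤ α_f, α_n + α_f ≤ 1, α_n γ_bn ≥ t_n, and α_f γ_bn ≥ t_f (α_n γ_bn + 1) has a solution (α_n, α_f) if and only if t_n/γ_bn ≤ min(1/2, (γ_bn - t_f)/(γ_bn (t_f + 1))) and γ_bn ≥ t_f. -/

import Mathlib

/-!
Only the near user's power fraction matters: giving the far user everything that is left,
`αf = 1 - αn`, is optimal, and the smallest admissible `αn = tn / γbn` then makes both
remaining constraints as loose as possible. Feasibility thus reduces to `2 tn ≤ γbn` (so that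
`αn ≤ αf`) and `tn (tf + 1) ≤ γbn - tf` (the far user's SINR at that allocation).
The condition `γbn ≥ tf` is implied by the latter, since `tn (tf + 1) ≥ 0`.
-/

def PowerAllocationFeasible (γ tn tf : ℝ) : Prop :=
  ∃ αn αf : ℝ, 0 ≤ αn ∧ αn ≤ αf ∧ αn + αf ≤ 1 ∧ αn * γ ≥ tn ∧ αf * γ ≥ tf * (αn * γ + 1)

lemma two_rpow_two_mul_sub_one_pos {R : ℝ} (hR : 0 < R) : 0 < (2 : ℝ) ^ (2 * R) - 1 :=
  sub_pos.mpr (Real.one_lt_rpow one_lt_two (by positivity))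

section

variable {γ tn tf : ℝ}

lemma PowerAllocationFeasible.bounds (hγ : 0 ≤ γ) (htf : -1 ≤ tf)
    (h : PowerAllocationFeasible γ tn tf) : 2 * tn ≤ γ ∧ tn * (tf + 1) ≤ γ - tf := by
  obtain ⟨αn, αf, -, hle, hsum, hnear, hfar⟩ := h
  have hαf : αf * γ ≤ (1 - αn) * γ := mul_le_mul_of_nonneg_right (by linarith) hγ
  constructor
  · nlinarith
  · nlinarith [mul_le_mul_of_nonneg_right hnear (by linarith : 0 ≤ tf + 1)]

lemma powerAllocationFeasible_of_bounds (hγ : 0 < γ) (htn : 0 ≤ tn) (hhalf : 2 * tn ≤ γ)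
    (hfar : tn * (tf + 1) ≤ γ - tf) : PowerAllocationFeasible γ tn tf := by
  have hnear : tn / γ * γ = tn := div_mul_cancel₀ tn hγ.ne'
  refine ⟨tn / γ, 1 - tn / γ, by positivity, ?_, by linarith, hnear.ge, ?_⟩
  · have : tn / γ ≤ 1 / 2 := by rw [div_le_iff₀ hγ]; linarith
    linarith
  · rw [sub_mul, hnear, one_mul]
    linarith

theorem powerAllocationFeasible_iff (hγ : 0 < γ) (htn : 0 ≤ tn) (htf : -1 ≤ tf) :
    PowerAllocationFeasible γ tn tf ↔ 2 * tn ≤ γ ∧ tn * (tf + 1) ≤ γ - tf :=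
  ⟨PowerAllocationFeasible.bounds hγ.le htf,
    fun h => powerAllocationFeasible_of_bounds hγ htn h.1 h.2⟩

lemma div_le_min_thresholds_iff (hγ : 0 < γ) (htf : -1 < tf) :
    tn / γ ≤ min (1 / 2) ((γ - tf) / (γ * (tf + 1))) ↔
      2 * tn ≤ γ ∧ tn * (tf + 1) ≤ γ - tf := by
  have htf1 : 0 < tf + 1 := by linarith
  rw [le_min_iff, div_le_iff₀ hγ, div_le_div_iff₀ hγ (by positivity),
    mul_left_comm, mul_comm (γ - tf), mul_le_mul_iff_right₀ hγ]
  constructor <;> rintro ⟨h1, h2⟩ <;> constructor <;> linarith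

end

/-- HD C-NOMA BS power-allocation feasibility (Theorem 1, BS part). -/
theorem stmt_0 (γbn Rn Rf : ℝ) (hγ : 0 < γbn) (hRn : 0 < Rn) (hRf : 0 < Rf)
    (tn tf : ℝ) (htn : tn = 2 ^ (2 * Rn) - 1) (htf : tf = 2 ^ (2 * Rf) - 1) :
    (∃ αn αf : ℝ, 0 ≤ αn ∧ αn ≤ αf ∧ αn + αf ≤ 1 ∧
      αn * γbn ≥ tn ∧ αf * γbn ≥ tf * (αn * γbn + 1)) ↔
    (tn / γbn ≤ min (1 / 2) ((γbn - tf) / (γbn * (tf + 1))) ∧ γbn ≥ tf) := by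
  have htn0 : 0 < tn := htn ▸ two_rpow_two_mul_sub_one_pos hRn
  have htf0 : 0 < tf := htf ▸ two_rpow_two_mul_sub_one_pos hRf
  rw [div_le_min_thresholds_iff hγ (by linarith)]
  refine (powerAllocationFeasible_iff hγ htn0.le (by linarith)).trans
    ⟨fun h => ⟨h, ?_⟩, And.left⟩
  nlinarith [h.2]
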